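/- arXiv:1602.08912 — 3 statements merged into one kernel-verified Lean document; each statement's English description precedes it below -/
import Mathlib

section
/- Let C be a finite set of colors and ≺ a strict weak order on C^ω. If in every game on a finite graph with colors in C, every player whose preference is ≺ has the optimality-is-regular property, then ≺ has the weak OIR property: for all ultimately periodic p, q ∈ C^ω there is a regular language M ⊆ C* such that for every h ∈ C*, h ∈ M iff h⌢p ≺ h⌢q. -/
namespace GG

variable {V C A : Type}

/-- Append a finite list in front of an infinite sequence. -/
def appSeq (l : List V) (ρ : ℕ → V) : ℕ → V :=
  fun n => if n < l.length then l.getD n (ρ 0) else ρ (n - l.length)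

/-- Glue two histories, identifying the last vertex of `l` with the first of `l'`. -/
def glueL (l l' : List V) : List V := l.dropLast ++ l'

/-- Glue a history with a run, identifying the last vertex of `l` with the start of `ρ`. -/
def glueR (l : List V) (ρ : ℕ → V) : ℕ → V := appSeq l.dropLast ρ

/-- Ultimately periodic (regular) sequence. -/
def UltPeriodic (ρ : ℕ → V) : Prop := ∃ k p : ℕ, 0 < p ∧ ∀ n, k ≤ n → ρ (n + p) = ρ n

/-- Strict weak order: irreflexive, transitive, with transitive incomparability. -/
def SWO (r : (ℕ → C) → (ℕ → C) → Prop) : Prop :=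
  (∀ x, ¬ r x x) ∧ (∀ x y z, r x y → r y z → r x z) ∧
    (∀ x y z, ¬ r x y → ¬ r y z → ¬ r x z)

/-- A strategy uses `m` bits of memory: it is induced by a strategic update
`σ : V × {0,1}^m → V × {0,1}^m` together with an initial memory content. -/
def UsesMem (m : ℕ) (s : List V → V) : Prop :=
  ∃ (σ : V × (Fin m → Bool) → V × (Fin m → Bool)) (M₀ : Fin m → Bool),
    ∀ (l : List V) (v : V),
      s (l ++ [v]) = (σ (v, l.foldl (fun M u => (σ (u, M)).2) M₀)).1

/-- A finite-memory strategy. -/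
def FinMem (s : List V → V) : Prop := ∃ m, UsesMem m s

/-- Regular language: recognized by a deterministic finite automaton. -/
def RegLang {α : Type} (L : Set (List α)) : Prop :=
  ∃ (Q : Type) (_ : Fintype Q) (step : Q → α → Q) (init : Q) (acc : Set Q),
    ∀ w : List α, w ∈ L ↔ w.foldl step init ∈ acc

/-- Repeat a finite word `n` times. -/
def repW (l : List C) (n : ℕ) : List C := (List.replicate n l).flatten

/-- The infinite word `u · w^ω` (with default letter `d`, unused when `w ≠ []`). -/
def extWord (d : C) (u w : List C) : ℕ → C := fun n =>
  if n < u.length then u.getD n d else w.getD ((n - u.length) % w.length) d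

/-- The regular-Mont condition for a preference on infinite color sequences. -/
def RegularMont (prec : (ℕ → C) → (ℕ → C) → Prop) : Prop :=
  ∀ (d : C) (h₀ h₁ h₂ h₃ : List C), h₁ ≠ [] → h₃ ≠ [] →
    (∀ n : ℕ, prec (extWord d (h₀ ++ repW h₁ n ++ h₂) h₃)
        (extWord d (h₀ ++ repW h₁ (n + 1) ++ h₂) h₃)) →
    prec (extWord d (h₀ ++ h₂) h₃) (extWord d h₀ h₁)

/-- The weak optimality-is-regular property of a preference. -/
def WeakOIR (prec : (ℕ → C) → (ℕ → C) → Prop) : Prop :=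
  ∀ p q : ℕ → C, UltPeriodic p → UltPeriodic q →
    ∃ M : Set (List C), RegLang M ∧ ∀ h : List C, h ∈ M ↔ prec (appSeq h p) (appSeq h q)

/-- Automatic-piecewise prefix-linearity of a preference on `C^ω` (word level). -/
def APPLword (prec : (ℕ → C) → (ℕ → C) → Prop) : Prop :=
  ∃ (Q : Type) (_ : Fintype Q) (step : Q → C → Q) (init : Q),
    ∀ h h' : List C, h.foldl step init = h'.foldl step init →
      ∀ p q : ℕ → C,
        (prec (appSeq h p) (appSeq h q) ↔ prec (appSeq h' p) (appSeq h' q))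

/-- A multi-player game played on a finite directed graph in which every
vertex has an outgoing edge. Players compare runs via color traces. -/
structure Game (V C A : Type) where
  edge : V → V → Prop
  serial : ∀ v, ∃ w, edge v w
  start : V
  owner : V → A
  color : V → C
  pref : A → (ℕ → C) → (ℕ → C) → Prop

/-- Shifted strategy `s^h`. -/
def shiftStrat (l : List V) (s : List V → V) : List V → V :=
  fun l' => s (l.dropLast ++ l')

namespace Game

variable (g : Game V C A)

def lastV (l : List V) : V := l.getLast?.getD g.start

/-- Histories: finite paths starting at the start vertex. -/
def IsHist (l : List V) : Prop :=
  l ≠ [] ∧ l.head? = some g.start ∧ l.Chain' g.edge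

/-- Runs: infinite paths starting at the start vertex. -/
def IsRun (ρ : ℕ → V) : Prop :=
  ρ 0 = g.start ∧ ∀ n, g.edge (ρ n) (ρ (n + 1))

/-- Runs are compared via their color traces. -/
def runPref (a : A) (ρ ρ' : ℕ → V) : Prop :=
  g.pref a (fun n => g.color (ρ n)) (fun n => g.color (ρ' n))

/-- Validity of a strategy on the set `P` of controlled vertices. -/
def ValidOn (P : V → Prop) (s : List V → V) : Prop :=
  ∀ l, g.IsHist l → P (g.lastV l) → g.edge (g.lastV l) (s l)

def ValidStrat (a : A) (s : List V → V) : Prop :=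
  g.ValidOn (fun v => g.owner v = a) s

/-- Validity for the coalition of all players other than `a`. -/
def ValidCo (a : A) (s : List V → V) : Prop :=
  g.ValidOn (fun v => g.owner v ≠ a) s

def _root_.GG.histUpTo (ρ : ℕ → V) (n : ℕ) : List V := (List.range (n + 1)).map ρ

def _root_.GG.CompatOn (P : V → Prop) (s : List V → V) (ρ : ℕ → V) : Prop :=
  ∀ n, P (ρ n) → ρ (n + 1) = s (GG.histUpTo ρ n)

/-- A run is compatible with a strategy of player `a`. -/
def Compat (a : A) (s : List V → V) (ρ : ℕ → V) : Prop :=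
  GG.CompatOn (fun v => g.owner v = a) s ρ

def CompatCo (a : A) (s : List V → V) (ρ : ℕ → V) : Prop :=
  GG.CompatOn (fun v => g.owner v ≠ a) s ρ

/-- `s` is a winning strategy of Player 1 (= player `a`) in the threshold game
`g_{a,ρ}`: every compatible run is strictly preferred to `ρ`. -/
def Wins1 (a : A) (ρ : ℕ → V) (s : List V → V) : Prop :=
  g.ValidStrat a s ∧ ∀ ρ', g.IsRun ρ' → g.Compat a s ρ' → g.runPref a ρ ρ'

/-- `s` is a winning strategy of Player 2 (the coalition) in the threshold game `g_{a,ρ}`. -/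
def Wins2 (a : A) (ρ : ℕ → V) (s : List V → V) : Prop :=
  g.ValidCo a s ∧ ∀ ρ', g.IsRun ρ' → g.CompatCo a s ρ' → ¬ g.runPref a ρ ρ'

/-- Player 1 wins the non-strict threshold game for `a` and `ρ` with `s`. -/
def Wins1NS (a : A) (ρ : ℕ → V) (s : List V → V) : Prop :=
  g.ValidStrat a s ∧ ∀ ρ', g.IsRun ρ' → g.Compat a s ρ' → ¬ g.runPref a ρ' ρ

/-- Player 2 wins the non-strict threshold game for `a` and `ρ` with `s`. -/
def Wins2NS (a : A) (ρ : ℕ → V) (s : List V → V) : Prop :=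
  g.ValidCo a s ∧ ∀ ρ', g.IsRun ρ' → g.CompatCo a s ρ' → g.runPref a ρ' ρ

/-- The future game `g^h` after history `l`. -/
def future (l : List V) : Game V C A where
  edge := g.edge
  serial := g.serial
  start := g.lastV l
  owner := g.owner
  color := g.color
  pref := fun a p q =>
    g.pref a (appSeq (l.dropLast.map g.color) p) (appSeq (l.dropLast.map g.color) q)

/-- The guarantee `γ_a(s)` of a strategy. -/
def gam (a : A) (s : List V → V) : Set (ℕ → V) :=
  {ρ | g.IsRun ρ ∧ ∃ ρ', g.IsRun ρ' ∧ g.Compat a s ρ' ∧ ¬ g.runPref a ρ ρ'}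

/-- The best guarantee `Γ_a`. -/
def Gam (a : A) : Set (ℕ → V) :=
  ⋂ s ∈ {s : List V → V | g.ValidStrat a s}, g.gam a s

def Optimal (a : A) (s : List V → V) : Prop := g.gam a s = g.Gam a

def OptimalAt (a : A) (s : List V → V) (l : List V) : Prop :=
  (g.future l).Optimal a (shiftStrat l s)

def SubgameOptimal (a : A) (s : List V → V) : Prop :=
  ∀ l, g.IsHist l → g.OptimalAt a s l

/-- A history is compatible with a strategy of player `a`. -/
def HistCompat (a : A) (s : List V → V) (l : List V) : Prop :=
  ∀ i : ℕ, i + 1 < l.length → g.owner (l.getD i g.start) = a →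
    l.getD (i + 1) g.start = s (l.take (i + 1))

def ConsistentOptimal (a : A) (s : List V → V) : Prop :=
  ∀ l, g.IsHist l → g.HistCompat a s l → g.OptimalAt a s l

/-- The history of the play induced by a strategy profile, up to stage `n`. -/
def playHist (prof : A → List V → V) : ℕ → List V
  | 0 => [g.start]
  | n + 1 =>
      playHist prof n ++
        [prof (g.owner (g.lastV (playHist prof n))) (playHist prof n)]

/-- The run induced by a strategy profile. -/
def play (prof : A → List V → V) : ℕ → V := fun n => g.lastV (g.playHist prof n)

/-- Nash equilibrium. -/
def IsNash [DecidableEq A] (prof : A → List V → V) : Prop :=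
  (∀ a, g.ValidStrat a (prof a)) ∧
    ∀ a s', g.ValidStrat a s' →
      ¬ g.runPref a (g.play prof) (g.play (Function.update prof a s'))

/-- Optimality of the strategy `s` of player `a` is regular using `D` bits. -/
def OptRegBits (a : A) (s : List V → V) (D : ℕ) : Prop :=
  ∃ (Q : Type) (_ : Fintype Q) (step : Q → V → Q) (init : Q) (acc : Set Q),
    Fintype.card Q ≤ 2 ^ D ∧
      ∀ l, g.IsHist l → (l.foldl step init ∈ acc ↔ g.OptimalAt a s l)

/-- Player `a` has the optimality-is-regular property in `g`. -/
def OIR (a : A) : Prop :=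
  ∀ s, g.ValidStrat a s → FinMem s →
    ∃ (Q : Type) (_ : Fintype Q) (step : Q → V → Q) (init : Q) (acc : Set Q),
      ∀ l, g.IsHist l → (l.foldl step init ∈ acc ↔ g.OptimalAt a s l)

/-- The two-player antagonistic game associated to player `a`: Player `true`
controls `V_a` with preference `≺_a`, Player `false` the remaining vertices
with the inverse preference. -/
def anta [DecidableEq A] (a : A) : Game V C Bool where
  edge := g.edge
  serial := g.serial
  start := g.start
  owner := fun v => decide (g.owner v = a)
  color := g.color
  pref := fun p x y => if p = true then g.pref a x y else g.pref a y x

/-- The cumulative glued histories `h₀⌢h₁⌢…⌢h_n`. -/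
def _root_.GG.cumul (h₀ : List V) (hs : ℕ → List V) : ℕ → List V
  | 0 => h₀
  | n + 1 => glueL (GG.cumul h₀ hs n) (hs n)

/-- The preference of player `a` is Mont in `g`. -/
def MontPref (a : A) : Prop :=
  ∀ (h₀ : List V) (ρ : ℕ → V) (hs : ℕ → List V),
    g.IsHist h₀ → UltPeriodic ρ →
    (∀ n, g.IsRun (glueR (GG.cumul h₀ hs n) ρ)) →
    (∀ n, g.runPref a (glueR (GG.cumul h₀ hs n) ρ) (glueR (GG.cumul h₀ hs (n + 1)) ρ)) →
    ∀ lim : ℕ → V,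
      (∀ n k, k < (GG.cumul h₀ hs n).dropLast.length →
        lim k = (GG.cumul h₀ hs n).dropLast.getD k g.start) →
      (∀ N, ∃ n, N < (GG.cumul h₀ hs n).dropLast.length) →
      g.runPref a (glueR h₀ ρ) lim

/-- Player `a`'s preference is automatic-piecewise prefix-linear in `g`. -/
def APPLin (a : A) : Prop :=
  ∃ (Q : Type) (_ : Fintype Q) (step : Q → V → Q) (init : Q),
    ∀ h h', g.IsHist h → g.IsHist h' →
      h.foldl step init = h'.foldl step init →
      g.lastV h = g.lastV h' ∧
        ∀ ρ ρ' : ℕ → V,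
          g.IsRun (glueR h ρ) → g.IsRun (glueR h ρ') →
          g.IsRun (glueR h' ρ) → g.IsRun (glueR h' ρ') →
          (g.runPref a (glueR h ρ) (glueR h ρ') ↔ g.runPref a (glueR h' ρ) (glueR h' ρ'))

end Game

end GG

open GG

namespace S15

/-! ### Arithmetic for tracks -/

def trackIdx (k per n : ℕ) : ℕ := if n < k + per then n else k + (n - k) % per

def nxtN (k per n : ℕ) : ℕ := if n + 1 < k + per then n + 1 else k

lemma trackIdx_lt (k per n : ℕ) (h : 0 < per) : trackIdx k per n < k + per := by
  unfold trackIdx; split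
  · assumption
  · have := Nat.mod_lt (n - k) h; omega

lemma nxtN_lt (k per n : ℕ) (h : 0 < per) : nxtN k per n < k + per := by
  unfold nxtN; split
  · assumption
  · omega

lemma mod_period {C : Type} {f : ℕ → C} {k per : ℕ} (hper : 0 < per)
    (hf : ∀ n, k ≤ n → f (n + per) = f n) : ∀ m, f (k + m % per) = f (k + m) := by
  intro m
  induction m using Nat.strong_induction_on with
  | _ m ih =>
    by_cases hm : m < per
    · rw [Nat.mod_eq_of_lt hm]
    · push_neg at hm
      have h1 : m % per = (m - per) % per := Nat.mod_eq_sub_mod hm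
      have h2 : k + m = (k + (m - per)) + per := by omega
      rw [h1, ih (m - per) (by omega), h2, hf _ (by omega)]

lemma trackIdx_color {C : Type} {f : ℕ → C} {k per : ℕ} (hper : 0 < per)
    (hf : ∀ n, k ≤ n → f (n + per) = f n) (n : ℕ) : f (trackIdx k per n) = f n := by
  unfold trackIdx; split
  · rfl
  · rename_i hn
    push_neg at hn
    rw [mod_period hper hf]
    congr 1; omega

lemma trackIdx_succ (k per n : ℕ) (hper : 0 < per) :
    trackIdx k per (n + 1) = nxtN k per (trackIdx k per n) := by
  unfold trackIdx nxtN
  by_cases h1 : n + 1 < k + per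
  · rw [if_pos h1, if_pos (by omega : n < k + per), if_pos h1]
  · by_cases h2 : n < k + per
    · rw [if_neg h1, if_pos h2, if_neg (by omega)]
      have h3 : n + 1 - k = per := by omega
      rw [h3, Nat.mod_self]
      omega
    · rw [if_neg h1, if_neg h2]
      set r := (n - k) % per with hr
      have hrlt : r < per := Nat.mod_lt _ hper
      set d := (n - k) / per with hd
      have hdm := Nat.div_add_mod (n - k) per
      set A := per * d with hA
      have hA2 : A + r = n - k := by rw [hA, hd, hr]; exact hdm
      have hcast : n + 1 - k = A + (r + 1) := by omega
      rw [hcast]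
      by_cases hr1 : r + 1 < per
      · rw [if_pos (by omega), hA, Nat.mul_add_mod, Nat.mod_eq_of_lt hr1]
        omega
      · have hre : r + 1 = per := by omega
        rw [if_neg (by omega), hA, Nat.mul_add_mod, hre, Nat.mod_self]
        omega

/-! ### The game -/

abbrev Vt (C : Type) (kp pp kq pq : ℕ) : Type := (C ⊕ C) ⊕ (Fin (kp + pp) ⊕ Fin (kq + pq))

variable {C : Type} {kp pp kq pq : ℕ}

def hv (c : C) : Vt C kp pp kq pq := Sum.inl (Sum.inl c)
def av (c : C) : Vt C kp pp kq pq := Sum.inl (Sum.inr c)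
def pvx (i : Fin (kp + pp)) : Vt C kp pp kq pq := Sum.inr (Sum.inl i)
def qvx (i : Fin (kq + pq)) : Vt C kp pp kq pq := Sum.inr (Sum.inr i)

def edgeV : Vt C kp pp kq pq → Vt C kp pp kq pq → Prop
  | Sum.inl (Sum.inl _), Sum.inl _ => True
  | Sum.inl (Sum.inl _), Sum.inr _ => False
  | Sum.inl (Sum.inr _), Sum.inl _ => False
  | Sum.inl (Sum.inr _), Sum.inr (Sum.inl i) => (i : ℕ) = 0
  | Sum.inl (Sum.inr _), Sum.inr (Sum.inr i) => (i : ℕ) = 0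
  | Sum.inr (Sum.inl i), Sum.inr (Sum.inl j) => (j : ℕ) = nxtN kp pp i
  | Sum.inr (Sum.inl _), Sum.inr (Sum.inr _) => False
  | Sum.inr (Sum.inl _), Sum.inl _ => False
  | Sum.inr (Sum.inr i), Sum.inr (Sum.inr j) => (j : ℕ) = nxtN kq pq i
  | Sum.inr (Sum.inr _), Sum.inr (Sum.inl _) => False
  | Sum.inr (Sum.inr _), Sum.inl _ => False

def ownerV : Vt C kp pp kq pq → Bool
  | Sum.inl (Sum.inr _) => true
  | _ => false

def colorV (p q : ℕ → C) : Vt C kp pp kq pq → C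
  | Sum.inl (Sum.inl c) => c
  | Sum.inl (Sum.inr c) => c
  | Sum.inr (Sum.inl i) => p i
  | Sum.inr (Sum.inr i) => q i

def gm (prec : (ℕ → C) → (ℕ → C) → Prop) (p q : ℕ → C) (kp pp kq pq : ℕ)
    (hp : 0 < pp) (hq : 0 < pq) (c₀ : C) : Game (Vt C kp pp kq pq) C Bool where
  edge := edgeV
  serial := by
    intro v
    rcases v with (c | c) | (i | i)
    · exact ⟨hv c, trivial⟩
    · exact ⟨pvx ⟨0, by omega⟩, rfl⟩
    · exact ⟨pvx ⟨nxtN kp pp i, nxtN_lt _ _ _ hp⟩, rfl⟩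
    · exact ⟨qvx ⟨nxtN kq pq i, nxtN_lt _ _ _ hq⟩, rfl⟩
  start := hv c₀
  owner := ownerV
  color := colorV p q
  pref := fun _ => prec

def sP (hp : 0 < pp) : List (Vt C kp pp kq pq) → Vt C kp pp kq pq :=
  fun _ => pvx ⟨0, by omega⟩

def sQ (hq : 0 < pq) : List (Vt C kp pp kq pq) → Vt C kp pp kq pq :=
  fun _ => qvx ⟨0, by omega⟩

def runP (z : C) (hp : 0 < pp) : ℕ → Vt C kp pp kq pq
  | 0 => av z
  | n + 1 => pvx ⟨trackIdx kp pp n, trackIdx_lt _ _ _ hp⟩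

def runQ (z : C) (hq : 0 < pq) : ℕ → Vt C kp pp kq pq
  | 0 => av z
  | n + 1 => qvx ⟨trackIdx kq pq n, trackIdx_lt _ _ _ hq⟩


lemma trackIdx_zero {k per : ℕ} (h : 0 < per) : trackIdx k per 0 = 0 := by
  unfold trackIdx; rw [if_pos (by omega)]

section RunLemmas

variable {z : C} (hp : 0 < pp) (hq : 0 < pq)

lemma sP_val : sP hp [av z] = (runP z hp 1 : Vt C kp pp kq pq) := by
  show pvx ⟨0, _⟩ = pvx ⟨trackIdx kp pp 0, _⟩
  exact congrArg pvx (Fin.ext ((trackIdx_zero hp).symm : (0:ℕ) = trackIdx kp pp 0))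

lemma sQ_val : sQ hq [av z] = (runQ z hq 1 : Vt C kp pp kq pq) := by
  show qvx ⟨0, _⟩ = qvx ⟨trackIdx kq pq 0, _⟩
  exact congrArg qvx (Fin.ext ((trackIdx_zero hq).symm : (0:ℕ) = trackIdx kq pq 0))

lemma runP_ne_runQ_one : (runP z hp 1 : Vt C kp pp kq pq) ≠ runQ z hq 1 := by
  simp [runP, runQ, pvx, qvx]

lemma runP_edge (n : ℕ) : edgeV (runP z hp n) ((runP z hp (n + 1)) : Vt C kp pp kq pq) := by
  cases n with
  | zero => exact trackIdx_zero hp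
  | succ n => exact trackIdx_succ kp pp n hp

lemma runQ_edge (n : ℕ) : edgeV (runQ z hq n) ((runQ z hq (n + 1)) : Vt C kp pp kq pq) := by
  cases n with
  | zero => exact trackIdx_zero hq
  | succ n => exact trackIdx_succ kq pq n hq

lemma track_shape_p (ρ : ℕ → Vt C kp pp kq pq) (hstep : ∀ n, edgeV (ρ n) (ρ (n + 1)))
    (i0 : Fin (kp + pp)) (h1 : ρ 1 = pvx i0) (hi0 : (i0 : ℕ) = 0) :
    ∀ n, ρ (n + 1) = pvx ⟨trackIdx kp pp n, trackIdx_lt _ _ _ hp⟩ := by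
  intro n
  induction n with
  | zero =>
    rw [h1]
    exact congrArg pvx (Fin.ext (hi0.trans (trackIdx_zero hp).symm))
  | succ n ih =>
    have e := hstep (n + 1)
    rw [ih] at e
    rcases hr : ρ (n + 2) with (c | c) | (j | j) <;> rw [hr] at e
    · exact e.elim
    · exact e.elim
    · exact congrArg pvx (Fin.ext ((e : (j:ℕ) = nxtN kp pp (trackIdx kp pp n)).trans
        (trackIdx_succ kp pp n hp).symm))
    · exact e.elim

lemma track_shape_q (ρ : ℕ → Vt C kp pp kq pq) (hstep : ∀ n, edgeV (ρ n) (ρ (n + 1)))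
    (i0 : Fin (kq + pq)) (h1 : ρ 1 = qvx i0) (hi0 : (i0 : ℕ) = 0) :
    ∀ n, ρ (n + 1) = qvx ⟨trackIdx kq pq n, trackIdx_lt _ _ _ hq⟩ := by
  intro n
  induction n with
  | zero =>
    rw [h1]
    exact congrArg qvx (Fin.ext (hi0.trans (trackIdx_zero hq).symm))
  | succ n ih =>
    have e := hstep (n + 1)
    rw [ih] at e
    rcases hr : ρ (n + 2) with (c | c) | (j | j) <;> rw [hr] at e
    · exact e.elim
    · exact e.elim
    · exact e.elim
    · exact congrArg qvx (Fin.ext ((e : (j:ℕ) = nxtN kq pq (trackIdx kq pq n)).trans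
        (trackIdx_succ kq pq n hq).symm))

lemma run_shape (ρ : ℕ → Vt C kp pp kq pq) (h0 : ρ 0 = av z)
    (hstep : ∀ n, edgeV (ρ n) (ρ (n + 1))) :
    ρ = runP z hp ∨ ρ = runQ z hq := by
  have e := hstep 0
  rw [h0] at e
  rcases h1 : ρ 1 with (c | c) | (i | i) <;> rw [h1] at e
  · exact e.elim
  · exact e.elim
  · left
    funext n
    cases n with
    | zero => exact h0
    | succ n => exact track_shape_p hp ρ hstep i h1 e n
  · right
    funext n
    cases n with
    | zero => exact h0
    | succ n => exact track_shape_q hq ρ hstep i h1 e n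


section GameLemmas

variable {z : C} (hp : 0 < pp) (hq : 0 < pq)
variable (g' : Game (Vt C kp pp kq pq) C Bool)

lemma ownerV_true (ho : g'.owner = ownerV) {v : Vt C kp pp kq pq}
    (h : g'.owner v = true) : ∃ c, v = av c := by
  rw [ho] at h
  rcases v with (c | c) | (i | i)
  · exact absurd h (by simp [ownerV])
  · exact ⟨c, rfl⟩
  · exact absurd h (by simp [ownerV])
  · exact absurd h (by simp [ownerV])

lemma hist_single (hst : g'.start = av z) : g'.IsHist [av z] := by
  refine ⟨by simp, by simp [hst], List.isChain_singleton _⟩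

lemma lastV_single (v : Vt C kp pp kq pq) : g'.lastV [v] = v := by
  simp [Game.lastV]

lemma sP_valid (he : g'.edge = edgeV) (ho : g'.owner = ownerV) :
    g'.ValidStrat true (sP hp) := by
  intro l _ hown
  obtain ⟨c, hc⟩ := ownerV_true g' ho hown
  rw [he, hc]
  exact (rfl : ((⟨0, _⟩ : Fin (kp + pp)) : ℕ) = 0)

lemma sQ_valid (he : g'.edge = edgeV) (ho : g'.owner = ownerV) :
    g'.ValidStrat true (sQ hq) := by
  intro l _ hown
  obtain ⟨c, hc⟩ := ownerV_true g' ho hown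
  rw [he, hc]
  exact (rfl : ((⟨0, _⟩ : Fin (kq + pq)) : ℕ) = 0)

lemma valid_av (he : g'.edge = edgeV) (ho : g'.owner = ownerV) (hst : g'.start = av z)
    (s' : List (Vt C kp pp kq pq) → Vt C kp pp kq pq)
    (hval : g'.ValidStrat true s') :
    s' [av z] = runP z hp 1 ∨ s' [av z] = runQ z hq 1 := by
  have h := hval [av z] (hist_single g' hst)
    (by rw [lastV_single, ho]; rfl)
  rw [he, lastV_single] at h
  rcases hs' : s' [av z] with (c | c) | (i | i) <;> rw [hs'] at h
  · exact h.elim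
  · exact h.elim
  · exact Or.inl (congrArg pvx (Fin.ext ((h : (i:ℕ) = 0).trans (trackIdx_zero hp).symm)))
  · exact Or.inr (congrArg qvx (Fin.ext ((h : (i:ℕ) = 0).trans (trackIdx_zero hq).symm)))

lemma runP_isRun (he : g'.edge = edgeV) (hst : g'.start = av z) :
    g'.IsRun (runP z hp) := by
  refine ⟨hst.symm, fun n => ?_⟩
  rw [he]
  exact runP_edge hp n

lemma runQ_isRun (he : g'.edge = edgeV) (hst : g'.start = av z) :
    g'.IsRun (runQ z hq) := by
  refine ⟨hst.symm, fun n => ?_⟩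
  rw [he]
  exact runQ_edge hq n

lemma histUpTo_zero (ρ : ℕ → Vt C kp pp kq pq) : GG.histUpTo ρ 0 = [ρ 0] := by
  simp [GG.histUpTo, List.range_succ]

lemma runP_compat (ho : g'.owner = ownerV)
    (s' : List (Vt C kp pp kq pq) → Vt C kp pp kq pq)
    (hs1 : s' [av z] = runP z hp 1) : g'.Compat true s' (runP z hp) := by
  intro n hn
  cases n with
  | zero =>
    rw [histUpTo_zero]
    show runP z hp 1 = s' [av z]
    rw [hs1]
  | succ n =>
    exact absurd hn (by rw [ho]; simp [runP, ownerV, pvx])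

lemma runQ_compat (ho : g'.owner = ownerV)
    (s' : List (Vt C kp pp kq pq) → Vt C kp pp kq pq)
    (hs1 : s' [av z] = runQ z hq 1) : g'.Compat true s' (runQ z hq) := by
  intro n hn
  cases n with
  | zero =>
    rw [histUpTo_zero]
    show runQ z hq 1 = s' [av z]
    rw [hs1]
  | succ n =>
    exact absurd hn (by rw [ho]; simp [runQ, ownerV, qvx])

lemma compat_one (ho : g'.owner = ownerV) (ρ : ℕ → Vt C kp pp kq pq) (hρ0 : ρ 0 = av z)
    (s' : List (Vt C kp pp kq pq) → Vt C kp pp kq pq)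
    (hcomp : g'.Compat true s' ρ) : ρ 1 = s' [av z] := by
  have h := hcomp 0 (by rw [hρ0, ho]; rfl)
  rwa [histUpTo_zero, hρ0] at h

lemma run_shape' (he : g'.edge = edgeV) (hst : g'.start = av z)
    (ρ : ℕ → Vt C kp pp kq pq) (hρ : g'.IsRun ρ) :
    ρ = runP z hp ∨ ρ = runQ z hq := by
  refine run_shape hp hq ρ (by rw [hρ.1, hst]) (fun n => ?_)
  have := hρ.2 n
  rwa [he] at this

lemma compat_unique (he : g'.edge = edgeV) (ho : g'.owner = ownerV) (hst : g'.start = av z)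
    (s' : List (Vt C kp pp kq pq) → Vt C kp pp kq pq)
    (ρ : ℕ → Vt C kp pp kq pq) (hρ : g'.IsRun ρ) (hcomp : g'.Compat true s' ρ) :
    (s' [av z] = runP z hp 1 → ρ = runP z hp) ∧
    (s' [av z] = runQ z hq 1 → ρ = runQ z hq) := by
  have h1 : ρ 1 = s' [av z] := compat_one g' ho ρ (by rw [hρ.1, hst]) s' hcomp
  rcases run_shape' hp hq g' he hst ρ hρ with h | h
  · refine ⟨fun _ => h, fun hs => absurd ?_ (runP_ne_runQ_one (z := z) (kp := kp) (kq := kq) hp hq)⟩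
    rw [← hs, ← h1, h]
  · refine ⟨fun hs => absurd ?_ (runP_ne_runQ_one (z := z) (kp := kp) (kq := kq) hp hq), fun _ => h⟩
    rw [← hs, ← h1, h]

lemma opt_iff (he : g'.edge = edgeV) (ho : g'.owner = ownerV) (hst : g'.start = av z)
    (hirr : ∀ x, ¬ g'.pref true x x) :
    g'.Optimal true (sP hp) ↔ ¬ g'.runPref true (runP z hp) (runQ z hq) := by
  have hPrun : g'.IsRun (runP z hp) := runP_isRun hp g' he hst
  have hQrun : g'.IsRun (runQ z hq) := runQ_isRun hq g' he hst
  have hPcompat : g'.Compat true (sP hp) (runP z hp) :=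
    runP_compat hp g' ho (sP hp) (sP_val hp)
  have hQcompat : g'.Compat true (sQ hq) (runQ z hq) :=
    runQ_compat hq g' ho (sQ hq) (sQ_val hq)
  have hirr' : ∀ ρ, ¬ g'.runPref true ρ ρ := fun ρ => hirr _
  constructor
  · intro hopt hPQ
    have hmem : runP z hp ∈ g'.gam true (sP hp) :=
      ⟨hPrun, runP z hp, hPrun, hPcompat, hirr' _⟩
    rw [show g'.gam true (sP hp) = g'.Gam true from hopt] at hmem
    have hmem2 : runP z hp ∈ g'.gam true (sQ hq) :=
      Set.mem_iInter₂.mp hmem (sQ hq) (sQ_valid hq g' he ho)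
    obtain ⟨_, ρ', hρ'r, hρ'c, hn⟩ := hmem2
    have hQ : ρ' = runQ z hq :=
      (compat_unique hp hq g' he ho hst (sQ hq) ρ' hρ'r hρ'c).2 (sQ_val hq)
    rw [hQ] at hn
    exact hn hPQ
  · intro hnPQ
    show g'.gam true (sP hp) = g'.Gam true
    ext ρ
    constructor
    · rintro ⟨hr, ρ', hr', hc', hn⟩
      have hρ'P : ρ' = runP z hp :=
        (compat_unique hp hq g' he ho hst (sP hp) ρ' hr' hc').1 (sP_val hp)
      rw [hρ'P] at hn
      apply Set.mem_iInter₂.mpr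
      intro s' hval
      rcases valid_av hp hq g' he ho hst s' hval with hs | hs
      · exact ⟨hr, runP z hp, hPrun, runP_compat hp g' ho s' hs, hn⟩
      · refine ⟨hr, runQ z hq, hQrun, runQ_compat hq g' ho s' hs, ?_⟩
        rcases run_shape' hp hq g' he hst ρ hr with h | h <;> rw [h]
        · exact hnPQ
        · exact hirr' _
    · intro hmem
      exact Set.mem_iInter₂.mp hmem (sP hp) (sP_valid hp g' he ho)

end GameLemmas
section Encode

variable (prec : (ℕ → C) → (ℕ → C) → Prop) (p q : ℕ → C)

lemma appSeq_lt {α : Type} {l : List α} {ρ : ℕ → α} {n : ℕ} (h : n < l.length) :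
    appSeq l ρ n = l.getD n (ρ 0) := if_pos h

lemma appSeq_ge {α : Type} {l : List α} {ρ : ℕ → α} {n : ℕ} (h : ¬ n < l.length) :
    appSeq l ρ n = ρ (n - l.length) := if_neg h

def consSeq {α : Type} (z : α) (ρ : ℕ → α) : ℕ → α
  | 0 => z
  | n + 1 => ρ n

lemma appSeq_concat (y : List C) (z : C) (ρ : ℕ → C) :
    appSeq y (consSeq z ρ) = appSeq (y ++ [z]) ρ := by
  funext n
  by_cases h1 : n < y.length
  · rw [appSeq_lt h1, appSeq_lt (show n < (y ++ [z]).length by simp; omega)]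
    rw [List.getD_eq_getElem _ _ h1, List.getD_eq_getElem _ _ (by simp; omega)]
    exact (List.getElem_append_left h1).symm
  · by_cases h2 : n = y.length
    · subst h2
      rw [appSeq_lt (show y.length < (y ++ [z]).length by simp), appSeq_ge h1,
        Nat.sub_self]
      rw [List.getD_eq_getElem _ _ (by simp), List.getElem_concat_length]
      · rfl
      · rfl
    · rw [appSeq_ge h1, appSeq_ge (show ¬ n < (y ++ [z]).length by simp; omega)]
      rw [show n - y.length = (n - (y ++ [z]).length) + 1 by simp; omega]
      rfl

lemma chain_encode (w : List C) (z : C) :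
    List.Chain' edgeV (List.map (hv (kp := kp) (pp := pp) (kq := kq) (pq := pq)) w ++ [av z]) := by
  induction w with
  | nil => exact List.isChain_singleton _
  | cons c w ih =>
    cases w with
    | nil =>
      simp only [List.map_cons, List.map_nil, List.nil_append, List.cons_append]
      exact List.isChain_cons_cons.mpr ⟨trivial, List.isChain_singleton _⟩
    | cons c' w' =>
      simp only [List.map_cons, List.cons_append] at ih ⊢
      exact List.isChain_cons_cons.mpr ⟨trivial, ih⟩

variable (hp : 0 < pp) (hq : 0 < pq) (c₀ : C)

lemma isHist_encode (y : List C) (z : C) :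
    (gm prec p q kp pp kq pq hp hq c₀).IsHist (List.map hv (c₀ :: y) ++ [av z]) := by
  refine ⟨by simp, ?_, chain_encode _ _⟩
  simp only [List.map_cons, List.cons_append, List.head?_cons]
  rfl

lemma optAt (hirr : ∀ x, ¬ prec x x)
    (hPer : ∀ n, kp ≤ n → p (n + pp) = p n) (hQer : ∀ n, kq ≤ n → q (n + pq) = q n)
    (y : List C) (z : C) :
    (gm prec p q kp pp kq pq hp hq c₀).OptimalAt true (sP hp)
      (List.map hv (c₀ :: y) ++ [av z]) ↔
    ¬ prec (appSeq ((c₀ :: y) ++ [z]) p) (appSeq ((c₀ :: y) ++ [z]) q) := by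
  set g := gm prec p q kp pp kq pq hp hq c₀ with hg
  set l : List (Vt C kp pp kq pq) := List.map hv (c₀ :: y) ++ [av z] with hl
  have hlast : g.lastV l = av z := by
    rw [hl]
    show (List.map hv (c₀ :: y) ++ [av z]).getLast?.getD g.start = av z
    rw [List.getLast?_concat]
    rfl
  have hdrop : l.dropLast = List.map hv (c₀ :: y) := by
    rw [hl]
    exact List.dropLast_concat
  have key : g.OptimalAt true (sP hp) l ↔
      ¬ (g.future l).runPref true (runP z hp) (runQ z hq) := by
    show (g.future l).Optimal true (sP hp) ↔ _
    exact opt_iff hp hq (g.future l) rfl rfl hlast (fun x => hirr _)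
  rw [key]
  have hpre : List.map g.color l.dropLast = c₀ :: y := by
    rw [hdrop, List.map_map]
    have hcomp : (g.color ∘ hv : C → C) = id := by
      funext c
      rfl
    rw [hcomp, List.map_id]
  have htrP : (fun n => g.color (runP z hp n)) = consSeq z p := by
    funext n
    cases n with
    | zero => rfl
    | succ n =>
      show p (trackIdx kp pp n) = p n
      exact trackIdx_color hp hPer n
  have htrQ : (fun n => g.color (runQ z hq n)) = consSeq z q := by
    funext n
    cases n with
    | zero => rfl
    | succ n =>
      show q (trackIdx kq pq n) = q n
      exact trackIdx_color hq hQer n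
  have hrp : (g.future l).runPref true (runP z hp) (runQ z hq) ↔
      prec (appSeq ((c₀ :: y) ++ [z]) p) (appSeq ((c₀ :: y) ++ [z]) q) := by
    show prec (appSeq (List.map g.color l.dropLast) (fun n => g.color (runP z hp n)))
        (appSeq (List.map g.color l.dropLast) (fun n => g.color (runQ z hq n))) ↔ _
    rw [hpre, htrP, htrQ, appSeq_concat, appSeq_concat]
  rw [hrp]

end Encode
end RunLemmas

section DFA

variable {Qd : C → Type}

def stepF (hvs avs : ∀ c₀ : C, Qd c₀ → C → Qd c₀) (q0 : ∀ c₀, Qd c₀) :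
    Option (Σ c₀ : C, Option (Qd c₀ × Qd c₀)) → C →
      Option (Σ c₀ : C, Option (Qd c₀ × Qd c₀))
  | none, c => some ⟨c, none⟩
  | some ⟨c₀, none⟩, c => some ⟨c₀, some (hvs c₀ (q0 c₀) c, avs c₀ (q0 c₀) c)⟩
  | some ⟨c₀, some (q1, _)⟩, c => some ⟨c₀, some (hvs c₀ q1 c, avs c₀ q1 c)⟩

def accF (accD : ∀ c₀ : C, Set (Qd c₀)) (P0 : Prop) (P1 : C → Prop) :
    Option (Σ c₀ : C, Option (Qd c₀ × Qd c₀)) → Prop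
  | none => P0
  | some ⟨c₀, none⟩ => P1 c₀
  | some ⟨c₀, some (_, q2)⟩ => q2 ∉ accD c₀

lemma stepF_fold (hvs avs : ∀ c₀ : C, Qd c₀ → C → Qd c₀) (q0 : ∀ c₀, Qd c₀) :
    ∀ (t : List C) (c₀ c' : C) (q1 q2 : Qd c₀),
    List.foldl (stepF hvs avs q0) (some ⟨c₀, some (q1, q2)⟩) (c' :: t) =
      some ⟨c₀, some ((c' :: t).foldl (hvs c₀) q1,
        avs c₀ ((c' :: t).dropLast.foldl (hvs c₀) q1)
          ((c' :: t).getLast (List.cons_ne_nil _ _)))⟩ := by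
  intro t
  induction t with
  | nil => intro c₀ c' q1 q2; rfl
  | cons c'' t ih =>
    intro c₀ c' q1 q2
    show List.foldl (stepF hvs avs q0)
      (some ⟨c₀, some (hvs c₀ q1 c', avs c₀ q1 c')⟩) (c'' :: t) = _
    rw [ih c₀ c'' (hvs c₀ q1 c') (avs c₀ q1 c')]
    rw [List.getLast_cons (a := c') (List.cons_ne_nil c'' t)]
    rfl

lemma stepF_none (hvs avs : ∀ c₀ : C, Qd c₀ → C → Qd c₀) (q0 : ∀ c₀, Qd c₀)
    (c₀ c' : C) (t : List C) :
    List.foldl (stepF hvs avs q0) none (c₀ :: c' :: t) =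
      List.foldl (stepF hvs avs q0) (some ⟨c₀, some (q0 c₀, q0 c₀)⟩) (c' :: t) := rfl

end DFA
end S15

/-- Observation 5.3: the optimality-is-regular property (in all games) implies
the weak OIR property. -/
theorem stmt15
    {C : Type} [Fintype C]
    (prec : (ℕ → C) → (ℕ → C) → Prop) (hswo : GG.SWO prec)
    (hoir : ∀ (V A : Type) [Fintype V] (g : GG.Game V C A) (a : A),
      (∀ b, GG.SWO (g.pref b)) → g.pref a = prec → g.OIR a) :
    GG.WeakOIR prec := by
  intro p q hup huq
  obtain ⟨kp, pp, hpp, hPer⟩ := hup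
  obtain ⟨kq, pq, hqq, hQer⟩ := huq
  classical
  have hfm : GG.FinMem (S15.sP (C := C) (kp := kp) (kq := kq) (pq := pq) hpp) :=
    ⟨0, fun x => (S15.pvx ⟨0, by omega⟩, x.2), fun _ => false, fun l v => rfl⟩
  have H : ∀ c₀ : C, ∃ (Q : Type) (_ : Fintype Q)
      (step : Q → S15.Vt C kp pp kq pq → Q) (init : Q) (acc : Set Q),
      ∀ l, (S15.gm prec p q kp pp kq pq hpp hqq c₀).IsHist l →
        (l.foldl step init ∈ acc ↔
          (S15.gm prec p q kp pp kq pq hpp hqq c₀).OptimalAt true (S15.sP hpp) l) :=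
    fun c₀ => hoir (S15.Vt C kp pp kq pq) Bool (S15.gm prec p q kp pp kq pq hpp hqq c₀)
      true (fun _ => hswo) rfl (S15.sP hpp)
      (S15.sP_valid hpp _ rfl rfl) hfm
  choose Qd instD stepD initD accD specD using H
  haveI : ∀ c₀ : C, Fintype (Qd c₀) := instD
  set hvs : ∀ c₀ : C, Qd c₀ → C → Qd c₀ := fun c₀ a c => stepD c₀ a (S15.hv c) with hhvs
  set avs : ∀ c₀ : C, Qd c₀ → C → Qd c₀ := fun c₀ a c => stepD c₀ a (S15.av c) with havs
  set q0 : ∀ c₀ : C, Qd c₀ := fun c₀ => stepD c₀ (initD c₀) (S15.hv c₀) with hq0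
  refine ⟨{h | prec (appSeq h p) (appSeq h q)}, ?_, fun h => Iff.rfl⟩
  refine ⟨Option (Σ c₀ : C, Option (Qd c₀ × Qd c₀)), inferInstance,
    S15.stepF hvs avs q0, none,
    S15.accF accD (prec (appSeq [] p) (appSeq [] q))
      (fun c => prec (appSeq [c] p) (appSeq [c] q)), ?_⟩
  intro w
  match w with
  | [] => exact Iff.rfl
  | [c] => exact Iff.rfl
  | c₀ :: c' :: t =>
    set y := (c' :: t).dropLast with hy
    set z := (c' :: t).getLast (List.cons_ne_nil _ _) with hz
    have hyz : (c₀ :: y) ++ [z] = c₀ :: c' :: t := by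
      show c₀ :: (y ++ [z]) = _
      rw [hy, hz, List.dropLast_append_getLast]
    have hfold : List.foldl (S15.stepF hvs avs q0) none (c₀ :: c' :: t) =
        some ⟨c₀, some ((c' :: t).foldl (hvs c₀) (q0 c₀),
          avs c₀ (y.foldl (hvs c₀) (q0 c₀)) z)⟩ := by
      rw [S15.stepF_none, S15.stepF_fold]
    have hgamefold : (List.map S15.hv (c₀ :: y) ++ [S15.av z]).foldl (stepD c₀) (initD c₀)
        = avs c₀ (y.foldl (hvs c₀) (q0 c₀)) z := by
      rw [List.foldl_append]
      show stepD c₀ ((List.map S15.hv (c₀ :: y)).foldl (stepD c₀) (initD c₀)) (S15.av z) = _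
      rw [List.foldl_map]
      rfl
    have hspec := specD c₀ _ (S15.isHist_encode prec p q hpp hqq c₀ y z)
    rw [hgamefold] at hspec
    have hopt := S15.optAt prec p q hpp hqq c₀ hswo.1 hPer hQer y z
    have hfinal : avs c₀ (y.foldl (hvs c₀) (q0 c₀)) z ∈ accD c₀ ↔
        ¬ prec (appSeq (c₀ :: c' :: t) p) (appSeq (c₀ :: c' :: t) q) := by
      rw [hspec, hopt, hyz]
    rw [hfold]
    show prec (appSeq (c₀ :: c' :: t) p) (appSeq (c₀ :: c' :: t) q) ↔
      avs c₀ (y.foldl (hvs c₀) (q0 c₀)) z ∉ accD c₀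
    constructor
    · intro hm hin
      exact (hfinal.mp hin) hm
    · intro hni
      by_contra hnp
      exact hni (hfinal.mpr hnp)
end

section
/- Let g be an antagonistic game with players a and b (colors in a finite set C) such that: (1) for every one-player game for b (with colors in C and preference the inverse of ≺_a) there exists m ∈ ℕ such that b wins her winnable future threshold games in it using uniformly finite memory m; (2) there exists m' ∈ ℕ such that a wins her winnable future threshold games in g using uniformly finite memory m'; (3) ≺_a has the weak OIR property. Then player a has the optimality-is-regular property in g: for every finite-memory strategy s_a of a there is a deterministic finite automaton deciding, on input a history h, whether s_a is optimal at h. -/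
open GG

namespace GG

variable {V C A M : Type}

def IsLasso (K : ℕ) (ρ : ℕ → V) : Prop :=
  ∃ k p : ℕ, 0 < p ∧ k + p ≤ K ∧ ∀ n, k ≤ n → ρ (n + p) = ρ n

namespace IsLasso

variable {K : ℕ} {ρ : ℕ → V}

theorem mono {K' : ℕ} (h : IsLasso K ρ) (hK : K ≤ K') : IsLasso K' ρ :=
  let ⟨k, p, hp, hkp, hper⟩ := h
  ⟨k, p, hp, hkp.trans hK, hper⟩

theorem map {W : Type} (f : V → W) (h : IsLasso K ρ) : IsLasso K fun n => f (ρ n) :=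
  let ⟨k, p, hp, hkp, hper⟩ := h
  ⟨k, p, hp, hkp, fun n hn => congrArg f (hper n hn)⟩

theorem ultPeriodic (h : IsLasso K ρ) : UltPeriodic ρ :=
  let ⟨k, p, hp, _, hper⟩ := h
  ⟨k, p, hp, hper⟩

end IsLasso

theorem eq_of_periodic_of_eqOn {ρ ρ' : ℕ → V} {k p : ℕ} (hp : 0 < p)
    (hρ : ∀ n, k ≤ n → ρ (n + p) = ρ n) (hρ' : ∀ n, k ≤ n → ρ' (n + p) = ρ' n)
    (h : ∀ n < k + p, ρ n = ρ' n) : ρ = ρ' := by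
  funext n
  induction n using Nat.strong_induction_on with
  | _ n ih =>
    by_cases hn : n < k + p
    · exact h n hn
    · obtain ⟨j, rfl⟩ : ∃ j, n = j + p := ⟨n - p, by omega⟩
      rw [hρ j (by omega), hρ' j (by omega), ih j (by omega)]

instance [Finite V] (K : ℕ) : Finite {ρ : ℕ → V // IsLasso K ρ} := by
  choose k p hp hkp hper using fun ρ : {ρ : ℕ → V // IsLasso K ρ} => ρ.2
  refine Finite.of_injective (β := (Fin K → V) × Fin (K + 1) × Fin (K + 1))
    (fun ρ => (fun i => ρ.1 i, ⟨k ρ, by grind⟩, ⟨p ρ, by grind⟩)) fun ρ ρ' h => ?_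
  simp only [Prod.mk.injEq, Fin.mk.injEq] at h
  obtain ⟨hval, hk, hp'⟩ := h
  refine Subtype.ext (eq_of_periodic_of_eqOn (hp ρ) (hper ρ) (by rw [hk, hp']; exact hper ρ')
    fun n hn => congrFun hval ⟨n, by grind⟩)

theorem isLasso_iterate [Fintype M] (F : M → M) (x : M) :
    IsLasso (Fintype.card M) fun n => F^[n] x := by
  obtain ⟨i, j, hne, heq⟩ := Fintype.exists_ne_map_eq_of_card_lt
    (fun i : Fin (Fintype.card M + 1) => F^[i] x) (by simp)
  wlog hij : (i : ℕ) < j generalizing i j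
  · exact this j i hne.symm heq.symm (by omega)
  refine ⟨i, j - i, by omega, by omega, fun n hn => ?_⟩
  calc F^[n + (j - i)] x = F^[n - i] (F^[j] x) := by
        rw [← Function.iterate_add_apply]; congr 1; omega
    _ = F^[n] x := by
        rw [← heq, ← Function.iterate_add_apply]; congr 1; omega

theorem exists_minimal_of_finite {α : Type} {r : α → α → Prop} (irr : ∀ x, ¬ r x x)
    (tr : ∀ x y z, r x y → r y z → r x z) {S : Set α} (hS : S.Finite) (hne : S.Nonempty) :
    ∃ x ∈ S, ∀ y ∈ S, ¬ r y x := by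
  have : IsStrictOrder α r := { irrefl := irr, trans := tr }
  obtain ⟨⟨x, hx⟩, -, hmin⟩ :=
    (hS.wellFoundedOn (r := r)).has_min Set.univ ⟨⟨_, hne.some_mem⟩, trivial⟩
  exact ⟨x, hx, fun y hy => hmin ⟨y, hy⟩ trivial⟩

theorem SWO.comap {r : (ℕ → C) → (ℕ → C) → Prop} (h : SWO r) (f : (ℕ → V) → ℕ → C) :
    SWO fun x y => r (f x) (f y) :=
  let ⟨irr, tr, ntr⟩ := h
  ⟨fun _ => irr _, fun _ _ _ => tr _ _ _, fun _ _ _ => ntr _ _ _⟩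

section Automata

variable {α β γ : Type}

def FactorsThroughDFA (f : List α → β) : Prop :=
  ∃ (Q : Type) (_ : Fintype Q) (step : Q → α → Q) (init : Q),
    ∀ w w', w.foldl step init = w'.foldl step init → f w = f w'

namespace FactorsThroughDFA

theorem of_foldl {Q : Type} [Fintype Q] (step : Q → α → Q) (init : Q) :
    FactorsThroughDFA fun w => w.foldl step init :=
  ⟨Q, inferInstance, step, init, fun _ _ => id⟩

theorem eq_nil : FactorsThroughDFA fun w : List α => w = [] :=
  ⟨Bool, inferInstance, fun _ _ => false, true, fun w w' hw => by
    cases w <;> cases w' <;> simp_all [List.foldl_fixed']⟩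

theorem prodMk {f : List α → β} {f' : List α → γ} (hf : FactorsThroughDFA f)
    (hf' : FactorsThroughDFA f') : FactorsThroughDFA fun w => (f w, f' w) := by
  obtain ⟨Q, _, step, init, h⟩ := hf
  obtain ⟨Q', _, step', init', h'⟩ := hf'
  have hfold : ∀ (w : List α) q q', w.foldl (fun p x => (step p.1 x, step' p.2 x)) (q, q') =
      (w.foldl step q, w.foldl step' q') := by
    intro w
    induction w with
    | nil => intro _ _; rfl
    | cons x w ih => intro q q'; exact ih _ _
  refine ⟨Q × Q', inferInstance, fun p x => (step p.1 x, step' p.2 x), (init, init'),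
    fun w w' hw => ?_⟩
  rw [hfold, hfold, Prod.mk.injEq] at hw
  simp only [h w w' hw.1, h' w w' hw.2]

theorem pi {ι : Type} [Finite ι] {β : ι → Type} {f : ∀ i, List α → β i}
    (hf : ∀ i, FactorsThroughDFA (f i)) : FactorsThroughDFA fun w i => f i w := by
  classical
  have := Fintype.ofFinite ι
  choose Q _ step init h using hf
  have hfold : ∀ (w : List α) (q : ∀ i, Q i) i,
      w.foldl (fun q x i => step i (q i) x) q i = w.foldl (step i) (q i) := by
    intro w
    induction w with
    | nil => intro _ _; rfl
    | cons x w ih => intro q i; exact ih _ i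
  refine ⟨∀ i, Q i, inferInstance, fun q x i => step i (q i) x, init,
    fun w w' hw => funext fun i => h i w w' ?_⟩
  rw [← hfold, ← hfold, hw]

theorem comp_map {f : List β → γ} (hf : FactorsThroughDFA f) (φ : α → β) :
    FactorsThroughDFA fun w => f (w.map φ) := by
  obtain ⟨Q, _, step, init, h⟩ := hf
  exact ⟨Q, inferInstance, fun q x => step q (φ x), init,
    fun w w' hw => h _ _ (by simpa [List.foldl_map] using hw)⟩

theorem comp_dropLast {f : List α → β} (hf : FactorsThroughDFA f) :
    FactorsThroughDFA fun w => f w.dropLast := by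
  obtain ⟨Q, _, step, init, h⟩ := hf
  let step' : Q × Q → α → Q × Q := fun p x => (step p.1 x, p.1)
  have hfold : ∀ w : List α,
      w.foldl step' (init, init) = (w.foldl step init, w.dropLast.foldl step init) := by
    intro w
    induction w using List.reverseRecOn with
    | nil => rfl
    | append_singleton w x ih => simp [List.foldl_append, ih, step']
  refine ⟨Q × Q, inferInstance, step', (init, init), fun w w' hw => h _ _ ?_⟩
  rw [hfold, hfold] at hw
  exact congrArg Prod.snd hw

end FactorsThroughDFA

theorem Game.factorsThroughDFA_lastV [Fintype V] (G : Game V C A) :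
    FactorsThroughDFA G.lastV := by
  convert FactorsThroughDFA.of_foldl (fun (_ : V) v => v) G.start using 1
  funext l
  induction l using List.reverseRecOn <;> simp [Game.lastV]

theorem WeakOIR.factorsThroughDFA {prec : (ℕ → C) → (ℕ → C) → Prop} (h : WeakOIR prec)
    {p q : ℕ → C} (hp : UltPeriodic p) (hq : UltPeriodic q) :
    FactorsThroughDFA fun w => prec (appSeq w p) (appSeq w q) := by
  obtain ⟨L, ⟨Q, _, step, init, acc, hL⟩, hiff⟩ := h p q hp hq
  refine ⟨Q, inferInstance, step, init, fun w w' hw => propext ?_⟩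
  simp only [← hiff, hL, hw]

theorem exists_dfa_of_factorsThroughDFA {f : List α → β} {S P : List α → Prop}
    (hf : FactorsThroughDFA f) (hP : ∀ w w', S w → S w' → f w = f w' → P w → P w') :
    ∃ (Q : Type) (_ : Fintype Q) (step : Q → α → Q) (init : Q) (acc : Set Q),
      ∀ w, S w → (w.foldl step init ∈ acc ↔ P w) := by
  obtain ⟨Q, _, step, init, h⟩ := hf
  refine ⟨Q, inferInstance, step, init, {q | ∃ w, S w ∧ P w ∧ w.foldl step init = q},
    fun w hw => ⟨?_, fun hPw => ⟨w, hw, hPw, rfl⟩⟩⟩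
  rintro ⟨w', hw', hPw', heq⟩
  exact hP w' w hw' hw (h w' w heq) hPw'

end Automata

theorem histUpTo_eq_concat (ρ : ℕ → V) (n : ℕ) :
    histUpTo ρ n = (List.range n).map ρ ++ [ρ n] := by
  simp [histUpTo, List.range_succ]

namespace Game

variable (G : Game V C A) {a : A}

theorem lastV_of_ne_nil {l : List V} (hl : l ≠ []) : G.lastV l = l.getLast hl := by
  simp [Game.lastV, List.getLast?_eq_some_getLast hl]

theorem lastV_histUpTo (ρ : ℕ → V) (n : ℕ) : G.lastV (histUpTo ρ n) = ρ n := by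
  simp [Game.lastV, histUpTo_eq_concat]

theorem isHist_histUpTo {ρ : ℕ → V} {n : ℕ} (h0 : ρ 0 = G.start)
    (hedge : ∀ k < n, G.edge (ρ k) (ρ (k + 1))) : G.IsHist (histUpTo ρ n) := by
  refine ⟨by simp [histUpTo], by simp [histUpTo, List.head?_range, h0], ?_⟩
  rw [histUpTo, List.Chain', List.isChain_map]
  exact (List.isChain_range_succ _ _).2 hedge

theorem isRun_of_compat {t : List V → V} {ρ : ℕ → V} (ht : G.ValidStrat a t)
    (h0 : ρ 0 = G.start) (hedge : ∀ n, G.owner (ρ n) ≠ a → G.edge (ρ n) (ρ (n + 1)))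
    (hc : G.Compat a t ρ) : G.IsRun ρ := by
  refine ⟨h0, fun n => ?_⟩
  induction n using Nat.strong_induction_on with
  | _ n ih =>
    by_cases hn : G.owner (ρ n) = a
    · have := ht _ (G.isHist_histUpTo h0 ih) (by rwa [lastV_histUpTo])
      rwa [lastV_histUpTo, ← hc n hn] at this
    · exact hedge n hn

theorem exists_strategy_forcing {p : A} (hown : ∀ v, G.owner v = p) {ρ : ℕ → V}
    (hρ : G.IsRun ρ) : ∃ s, G.ValidStrat p s ∧ ∀ ρ', G.IsRun ρ' → G.Compat p s ρ' → ρ' = ρ := by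
  classical
  refine ⟨fun l => if G.edge (G.lastV l) (ρ l.length) then ρ l.length
      else (G.serial (G.lastV l)).choose, fun l _ _ => ?_, fun ρ' hr' hc' => funext fun n => ?_⟩
  · dsimp only
    split_ifs with h
    exacts [h, (G.serial _).choose_spec]
  · induction n with
    | zero => rw [hr'.1, hρ.1]
    | succ n ih =>
      rw [hc' n (hown _)]
      simp only [lastV_histUpTo, ih, if_pos (hρ.2 n),
        show (histUpTo ρ' n).length = n + 1 by simp [histUpTo]]

theorem isHist_dropLast_append {l l' : List V} (hl : G.IsHist l) (hl' : (G.future l).IsHist l') :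
    G.IsHist (l.dropLast ++ l') := by
  obtain ⟨hne, hhead, hchain⟩ := hl
  obtain ⟨hne', hhead', hchain'⟩ := hl'
  obtain ⟨x, r, rfl⟩ := List.exists_cons_of_ne_nil hne'
  have hx : l.dropLast ++ [x] = l := by
    obtain rfl : x = G.lastV l := Option.some.inj hhead'
    rw [G.lastV_of_ne_nil hne, List.dropLast_append_getLast]
  have hchain'' := List.IsChain.append_overlap (l₂ := [x]) (l₃ := r) (by rwa [hx]) hchain'
    (List.cons_ne_nil x [])
  rw [hx] at hchain''
  rw [show l.dropLast ++ x :: r = l.dropLast ++ [x] ++ r by simp, hx]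
  exact ⟨by simp [hne], by rw [List.head?_append_of_ne_nil _ hne, hhead], hchain''⟩

theorem validStrat_shiftStrat {s : List V → V} (hs : G.ValidStrat a s) {l : List V}
    (hl : G.IsHist l) : (G.future l).ValidStrat a (shiftStrat l s) := by
  intro l' hl' hown
  have hlast : (G.future l).lastV l' = G.lastV (l.dropLast ++ l') := by
    rw [lastV_of_ne_nil _ hl'.1, lastV_of_ne_nil _ (by simp [hl'.1]), List.getLast_append_right]
  rw [hlast] at hown ⊢
  exact hs _ (G.isHist_dropLast_append hl hl') hown

theorem isRun_future_congr {l l' : List V} (h : G.lastV l = G.lastV l') {ρ : ℕ → V} :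
    (G.future l).IsRun ρ ↔ (G.future l').IsRun ρ := by
  simp only [Game.IsRun, Game.future, h]

theorem validStrat_future_congr {l l' : List V} (h : G.lastV l = G.lastV l') {t : List V → V} :
    (G.future l).ValidStrat a t ↔ (G.future l').ValidStrat a t := by
  simp only [Game.ValidStrat, Game.ValidOn, Game.IsHist, Game.lastV, Game.future] at h ⊢
  rw [h]

theorem swo_runPref_future (hswo : SWO (G.pref a)) (l : List V) :
    SWO ((G.future l).runPref a) :=
  hswo.comap fun ρ => appSeq (l.dropLast.map G.color) fun n => G.color (ρ n)

theorem not_optimal_iff (hswo : SWO (G.runPref a)) {s : List V → V} (hs : G.ValidStrat a s) :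
    ¬ G.Optimal a s ↔ ∃ ρ, G.IsRun ρ ∧ G.Compat a s ρ ∧ ∃ t, G.Wins1 a ρ t := by
  obtain ⟨irr, -, ntr⟩ := hswo
  have hGam : G.Gam a ⊆ G.gam a s := fun ρ hρ => Set.mem_iInter₂.1 hρ s hs
  constructor
  · intro hopt
    obtain ⟨ρ, ⟨hρ, ρ', hr', hc', hle⟩, hnot⟩ :=
      Set.not_subset.1 fun h => hopt (h.antisymm hGam)
    simp only [Game.Gam, Set.mem_iInter₂, not_forall] at hnot
    obtain ⟨t, ht, hnt⟩ := hnot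
    refine ⟨ρ', hr', hc', t, ht, fun ρ'' hr'' hc'' => ?_⟩
    by_contra h
    exact hnt ⟨hρ, ρ'', hr'', hc'', ntr _ _ _ hle h⟩
  · rintro ⟨ρ, hr, hc, t, ht, hwin⟩ hopt
    have hρ : ρ ∈ G.Gam a := by
      rw [← show G.gam a s = G.Gam a from hopt]
      exact ⟨hr, ρ, hr, hc, irr ρ⟩
    obtain ⟨-, ρ', hr', hc', hle⟩ := Set.mem_iInter₂.1 hρ t ht
    exact hle (hwin ρ' hr' hc')

end Game

def memAfter (σ : V × M → V × M) (m : M) (l : List V) : M :=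
  l.foldl (fun m v => (σ (v, m)).2) m

/-- `UsesMem k s` unfolds to `∃ σ m, InducedBy σ m s` with `m : Fin k → Bool`. -/
def InducedBy (σ : V × M → V × M) (m : M) (s : List V → V) : Prop :=
  ∀ l v, s (l ++ [v]) = (σ (v, memAfter σ m l)).1

def withMemory (σ : V × M → V × M) (m : M) (ρ : ℕ → V) (n : ℕ) : V × M :=
  (ρ n, memAfter σ m ((List.range n).map ρ))

theorem withMemory_succ_snd (σ : V × M → V × M) (m : M) (ρ : ℕ → V) (n : ℕ) :
    (withMemory σ m ρ (n + 1)).2 = (σ (withMemory σ m ρ n)).2 := by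
  simp [withMemory, memAfter, List.range_succ]

namespace InducedBy

variable {σ : V × M → V × M} {m : M} {s : List V → V}

theorem apply_histUpTo (hs : InducedBy σ m s) (ρ : ℕ → V) (n : ℕ) :
    s (histUpTo ρ n) = (σ (withMemory σ m ρ n)).1 := by
  rw [histUpTo_eq_concat, hs]
  rfl

theorem compat_iff (hs : InducedBy σ m s) (G : Game V C A) {a : A} {ρ : ℕ → V} :
    G.Compat a s ρ ↔ ∀ n, G.owner (ρ n) = a → ρ (n + 1) = (σ (withMemory σ m ρ n)).1 := by
  simp only [Game.Compat, CompatOn, hs.apply_histUpTo]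

theorem compat_congr {t : List V → V} (hs : InducedBy σ m s) (ht : InducedBy σ m t)
    (G : Game V C A) {a : A} {ρ : ℕ → V} : G.Compat a s ρ ↔ G.Compat a t ρ := by
  rw [hs.compat_iff, ht.compat_iff]

theorem shiftStrat (hs : InducedBy σ m s) (l : List V) :
    InducedBy σ (memAfter σ m l.dropLast) (shiftStrat l s) := by
  intro l' v
  rw [GG.shiftStrat, ← List.append_assoc, hs, memAfter, List.foldl_append]
  rfl

end InducedBy

open Classical in
/-- Let the other players always move to a fixed successor: the play is then an orbit of a
self-map of the finite set `V × M`. -/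
theorem Game.exists_isLasso_outcome [Fintype V] [Fintype M] (G : Game V C A) {a : A}
    {σ : V × M → V × M} {m : M} {t : List V → V} (ht : InducedBy σ m t)
    (hv : G.ValidStrat a t) :
    ∃ ρ, G.IsRun ρ ∧ G.Compat a t ρ ∧ IsLasso (Fintype.card (V × M)) ρ := by
  let F : V × M → V × M := fun q =>
    if G.owner q.1 = a then σ q else ((G.serial q.1).choose, (σ q).2)
  let ρ n := (F^[n] (G.start, m)).1
  have hmem : ∀ n, F^[n] (G.start, m) = withMemory σ m ρ n := by
    intro n
    induction n with
    | zero => rfl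
    | succ n ih =>
      refine Prod.ext rfl ?_
      rw [withMemory_succ_snd, ← ih, Function.iterate_succ_apply']
      dsimp only [F]
      split_ifs <;> rfl
  have hmove : ∀ n, ρ (n + 1) = (F (withMemory σ m ρ n)).1 := fun n => by
    rw [← hmem]
    exact congrArg Prod.fst (Function.iterate_succ_apply' F n _)
  have hc : G.Compat a t ρ :=
    (ht.compat_iff G).2 fun n hn => by rw [hmove]; simp [F, withMemory, hn]
  refine ⟨ρ, G.isRun_of_compat hv rfl (fun n hn => ?_) hc, hc, (isLasso_iterate F _).map Prod.fst⟩
  rw [hmove]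
  simp only [F, withMemory, if_neg hn]
  exact (G.serial _).choose_spec

namespace Game

section OpponentGame

variable (g : Game V C A) (a : A)

/-- The one-player game of the opponents of `a` against a strategy of `a` with strategic update
`σ`. Plays start in a free copy of the arena (`inl`), where any history can be replayed, and then
move to the product of the arena with the memory (`inr`), where `a`'s moves follow `σ`. -/
def opponentGame (σ : V × M → V × M) : Game (V ⊕ V × M) C Bool where
  edge
    | .inl u, .inl w => g.edge u w
    | .inl u, .inr (w, _) => g.edge u w
    | .inr q, .inr q' => q'.2 = (σ q).2 ∧
        (g.owner q.1 = a ∧ q'.1 = (σ q).1 ∨ g.owner q.1 ≠ a ∧ g.edge q.1 q'.1)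
    | .inr _, .inl _ => False
  serial
    | .inl u => let ⟨w, hw⟩ := g.serial u; ⟨.inl w, hw⟩
    | .inr q => by
      by_cases hq : g.owner q.1 = a
      · exact ⟨.inr (σ q), rfl, .inl ⟨hq, rfl⟩⟩
      · obtain ⟨w, hw⟩ := g.serial q.1
        exact ⟨.inr (w, (σ q).2), rfl, .inr ⟨hq, hw⟩⟩
  start := .inl g.start
  owner _ := false
  color x := g.color (x.elim id Prod.fst)
  pref p x y := bif p then g.pref a x y else g.pref a y x

def embedHist (m : M) (l : List V) : List (V ⊕ V × M) :=
  l.dropLast.map .inl ++ [.inr (g.lastV l, m)]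

variable {g a} {σ : V × M → V × M} {m : M} {l : List V}

theorem isHist_embedHist (hl : g.IsHist l) (hne : l.dropLast ≠ []) :
    (g.opponentGame a σ).IsHist (g.embedHist m l) := by
  obtain ⟨hl₀, hhead, hchain⟩ := hl
  rw [← List.dropLast_append_getLast hl₀] at hhead hchain
  refine ⟨by simp [embedHist], ?_, ?_⟩
  · rw [List.head?_append_of_ne_nil _ hne] at hhead
    rw [embedHist, List.head?_append_of_ne_nil _ (List.map_eq_nil_iff.not.2 hne), List.head?_map,
      hhead]
    rfl
  · obtain ⟨hchain₁, -, hlink⟩ := List.isChain_append.1 hchain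
    refine List.IsChain.append ((List.isChain_map _).2 hchain₁) (List.isChain_singleton _) ?_
    simp only [List.getLast?_map, Option.mem_def, Option.map_eq_some_iff, List.head?_cons,
      Option.some.injEq, forall_exists_index, and_imp]
    rintro _ u hu rfl _ rfl
    rw [g.lastV_of_ne_nil hl₀]
    exact hlink u hu _ rfl

theorem start_future_embedHist :
    ((g.opponentGame a σ).future (g.embedHist m l)).start = .inr (g.lastV l, m) := by
  simp [Game.future, embedHist, Game.lastV]

theorem runPref_future_embedHist (x y : ℕ → V ⊕ V × M) :
    ((g.opponentGame a σ).future (g.embedHist m l)).runPref false x y ↔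
      (g.future l).runPref a (fun n => (y n).elim id Prod.fst)
        (fun n => (x n).elim id Prod.fst) := by
  simp [Game.runPref, Game.future, opponentGame, embedHist, Function.comp_def]

theorem edge_opponentGame_withMemory (ρ : ℕ → V) (n : ℕ) :
    (g.opponentGame a σ).edge (.inr (withMemory σ m ρ n)) (.inr (withMemory σ m ρ (n + 1))) ↔
      g.owner (ρ n) = a ∧ ρ (n + 1) = (σ (withMemory σ m ρ n)).1 ∨
        g.owner (ρ n) ≠ a ∧ g.edge (ρ n) (ρ (n + 1)) :=
  and_iff_right (withMemory_succ_snd σ m ρ n)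

theorem eq_withMemory_of_isRun {ρt : ℕ → V ⊕ V × M}
    (hρt : ((g.opponentGame a σ).future (g.embedHist m l)).IsRun ρt) :
    ρt = fun n => .inr (withMemory σ m (fun k => (ρt k).elim id Prod.fst) n) := by
  funext n
  induction n with
  | zero =>
    show ρt 0 = .inr ((ρt 0).elim id Prod.fst, m)
    rw [hρt.1, start_future_embedHist]
    rfl
  | succ n ih =>
    have hedge := hρt.2 n
    rw [ih] at hedge
    obtain ⟨q, hq⟩ : ∃ q, ρt (n + 1) = .inr q := by
      cases h : ρt (n + 1) with
      | inl _ => rw [h] at hedge; exact hedge.elim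
      | inr q => exact ⟨q, rfl⟩
    rw [hq] at hedge
    refine hq.trans (congrArg Sum.inr (Prod.ext ?_ ?_))
    · simp [withMemory, hq]
    · rw [withMemory_succ_snd]
      exact hedge.1

theorem isRun_future_embedHist_iff {t : List V → V} (ht : InducedBy σ m t)
    (hv : (g.future l).ValidStrat a t) {ρ : ℕ → V} :
    ((g.opponentGame a σ).future (g.embedHist m l)).IsRun (fun n => .inr (withMemory σ m ρ n)) ↔
      (g.future l).IsRun ρ ∧ (g.future l).Compat a t ρ := by
  simp only [Game.IsRun, start_future_embedHist]
  constructor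
  · rintro ⟨h0, hedge⟩
    have h0 : ρ 0 = g.lastV l := congrArg Prod.fst (Sum.inr_injective h0)
    have hc : (g.future l).Compat a t ρ := (ht.compat_iff _).2 fun n hn =>
      (((edge_opponentGame_withMemory ρ n).1 (hedge n)).resolve_right fun h => h.1 hn).2
    refine ⟨(g.future l).isRun_of_compat hv h0 (fun n hn => ?_) hc, hc⟩
    exact (((edge_opponentGame_withMemory ρ n).1 (hedge n)).resolve_left fun h => hn h.1).2
  · rintro ⟨⟨h0, hedge⟩, hc⟩
    refine ⟨congrArg Sum.inr (Prod.ext h0 rfl), fun n => (edge_opponentGame_withMemory ρ n).2 ?_⟩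
    by_cases hn : g.owner (ρ n) = a
    · exact .inl ⟨hn, (ht.compat_iff _).1 hc n hn⟩
    · exact .inr ⟨hn, hedge n⟩

end OpponentGame

def WinsFutureThresholds (G : Game V C A) (p : A) (k : ℕ) : Prop :=
  ∀ l, G.IsHist l → ∀ ρ, (G.future l).IsRun ρ → (∃ s, (G.future l).Wins1 p ρ s) →
    ∃ s, (G.future l).Wins1 p ρ s ∧ UsesMem k s

variable {g : Game V C A} {a : A}

theorem IsHist.eq_start_of_dropLast_eq_nil {l : List V} (hl : g.IsHist l)
    (hne : l.dropLast = []) : l = [g.start] := by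
  obtain ⟨hl₀, hhead, -⟩ := hl
  rw [← List.dropLast_append_getLast hl₀, hne] at hhead ⊢
  simpa using hhead

/-- The opponents win the threshold game of `ρ₀` in `opponentGame`, hence with `k` bits of
memory by `H`, and in a one-player game a strategy with bounded memory has a lasso outcome. -/
theorem exists_isLasso_outcome_lt [Fintype V] [Fintype M] {σ : V × M → V × M} {k : ℕ}
    (H : (g.opponentGame a σ).WinsFutureThresholds false k) {l : List V} (hl : g.IsHist l)
    (hne : l.dropLast ≠ []) {m : M} {t : List V → V} (ht : InducedBy σ m t)
    (hv : (g.future l).ValidStrat a t) {ρ₀ ρ : ℕ → V}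
    (h₀ : (g.future l).IsRun ρ₀ ∧ (g.future l).Compat a t ρ₀)
    (h : (g.future l).IsRun ρ ∧ (g.future l).Compat a t ρ) (hlt : (g.future l).runPref a ρ ρ₀) :
    ∃ ρ', ((g.future l).IsRun ρ' ∧ (g.future l).Compat a t ρ') ∧
      IsLasso (Fintype.card ((V ⊕ V × M) × (Fin k → Bool))) ρ' ∧
        (g.future l).runPref a ρ' ρ₀ := by
  set G := (g.opponentGame a σ).future (g.embedHist m l)
  obtain ⟨s, hs, hforce⟩ :=
    G.exists_strategy_forcing (fun _ => rfl) ((isRun_future_embedHist_iff ht hv).2 h)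
  obtain ⟨s₁, ⟨hv₁, hwin₁⟩, σ₁, m₁, hσ₁⟩ :=
    H _ (isHist_embedHist hl hne) _ ((isRun_future_embedHist_iff ht hv).2 h₀)
      ⟨s, hs, fun ρ' hr' hc' => by rw [hforce ρ' hr' hc', runPref_future_embedHist]; exact hlt⟩
  obtain ⟨ρt, hrt, hct, hlasso⟩ := G.exists_isLasso_outcome hσ₁ hv₁
  refine ⟨_, (isRun_future_embedHist_iff ht hv).1 ((eq_withMemory_of_isRun hrt) ▸ hrt),
    hlasso.map _, (runPref_future_embedHist _ _).1 (hwin₁ ρt hrt hct)⟩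

variable (g a) in
def HasLassoMinima (K : ℕ) (σ : V × M → V × M) : Prop :=
  ∀ ⦃l : List V⦄ ⦃m : M⦄ ⦃t : List V → V⦄, g.IsHist l → l.dropLast ≠ [] → InducedBy σ m t →
    (g.future l).ValidStrat a t → ∃ ρ₀, ((g.future l).IsRun ρ₀ ∧ (g.future l).Compat a t ρ₀) ∧
      IsLasso K ρ₀ ∧
        ∀ ρ, (g.future l).IsRun ρ → (g.future l).Compat a t ρ → ¬ (g.future l).runPref a ρ ρ₀

theorem HasLassoMinima.mono {K K' : ℕ} {σ : V × M → V × M} (h : g.HasLassoMinima a K σ)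
    (hK : K ≤ K') : g.HasLassoMinima a K' σ := fun _ _ _ hl hne ht hv =>
  let ⟨ρ₀, hout, hlasso, hmin⟩ := h hl hne ht hv
  ⟨ρ₀, hout, hlasso.mono hK, hmin⟩

theorem hasLassoMinima_of_opponent [Fintype V] [Fintype M] (hswo : SWO (g.pref a))
    {σ : V × M → V × M} {k : ℕ} (H : (g.opponentGame a σ).WinsFutureThresholds false k) :
    g.HasLassoMinima a (Fintype.card ((V ⊕ V × M) × (Fin k → Bool))) σ := by
  intro l m t hl hne ht hv
  obtain ⟨irr, tr, -⟩ := g.swo_runPref_future hswo l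
  have hfin : {ρ | ((g.future l).IsRun ρ ∧ (g.future l).Compat a t ρ) ∧
      IsLasso (Fintype.card ((V ⊕ V × M) × (Fin k → Bool))) ρ}.Finite :=
    (Set.finite_coe_iff.1 (inferInstanceAs (Finite {ρ : ℕ → V // IsLasso _ ρ}))).subset
      fun _ h => h.2
  have hcard : Fintype.card (V × M) ≤ Fintype.card ((V ⊕ V × M) × (Fin k → Bool)) :=
    Fintype.card_le_of_injective (fun q => (.inr q, fun _ => false))
      fun _ _ h => Sum.inr_injective (congrArg Prod.fst h)
  obtain ⟨ρ, hr, hc, hlasso⟩ := (g.future l).exists_isLasso_outcome ht hv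
  obtain ⟨ρ₀, ⟨hout, hlasso₀⟩, hmin⟩ :=
    exists_minimal_of_finite irr tr hfin ⟨ρ, ⟨hr, hc⟩, hlasso.mono hcard⟩
  refine ⟨ρ₀, hout, hlasso₀, fun ρ' hr' hc' hlt => ?_⟩
  obtain ⟨ρ'', hout'', hlasso'', hlt''⟩ :=
    exists_isLasso_outcome_lt H hl hne ht hv hout ⟨hr', hc'⟩ hlt
  exact hmin ρ'' ⟨hout'', hlasso''⟩ hlt''

theorem exists_hasLassoMinima [Fintype V] [Fintype M] (hswo : SWO (g.pref a))
    (H : ∀ σ : V × M → V × M, ∃ k, (g.opponentGame a σ).WinsFutureThresholds false k) :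
    ∃ K, ∀ σ : V × M → V × M, g.HasLassoMinima a K σ := by
  choose k hk using H
  obtain ⟨K, hK⟩ := Finite.exists_le fun σ => Fintype.card ((V ⊕ V × M) × (Fin (k σ) → Bool))
  exact ⟨K, fun σ => (hasLassoMinima_of_opponent hswo (hk σ)).mono (hK σ)⟩

section Characterization

variable (hswo : SWO (g.pref a)) {s : List V → V} (hs : g.ValidStrat a s)
  {σ₀ : V × M → V × M} {m₀ : M} (hσ₀ : InducedBy σ₀ m₀ s) {k K : ℕ}
  (H : g.WinsFutureThresholds a k) (hmin₀ : g.HasLassoMinima a K σ₀)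
  (hmin : ∀ σ : V × (Fin k → Bool) → V × (Fin k → Bool), g.HasLassoMinima a K σ)
include hswo hs hσ₀ H hmin₀ hmin

/-- By `H` the better strategy can be taken with `k` bits of memory, and `HasLassoMinima`
reduces both quantifications over outcomes to lassos. -/
theorem not_optimalAt_iff {l : List V} (hl : g.IsHist l) (hne : l.dropLast ≠ []) :
    ¬ g.OptimalAt a s l ↔ ∃ ρ, IsLasso K ρ ∧ (g.future l).IsRun ρ ∧
      (g.future l).Compat a (shiftStrat l s) ρ ∧ ∃ t, UsesMem k t ∧ (g.future l).ValidStrat a t ∧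
        ∀ ρ', IsLasso K ρ' → (g.future l).IsRun ρ' → (g.future l).Compat a t ρ' →
          (g.future l).runPref a ρ ρ' := by
  have hswoF := g.swo_runPref_future hswo l
  have hsF := g.validStrat_shiftStrat hs hl
  rw [Game.OptimalAt, (g.future l).not_optimal_iff hswoF hsF]
  obtain ⟨-, -, ntr⟩ := hswoF
  constructor
  · rintro ⟨ρ, hr, hc, t, ht⟩
    obtain ⟨t', ⟨hv', hwin'⟩, hk⟩ := H l hl ρ hr ⟨t, ht⟩
    obtain ⟨ρ₀, ⟨hr₀, hc₀⟩, hlasso₀, hle₀⟩ := hmin₀ hl hne (hσ₀.shiftStrat l) hsF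
    refine ⟨ρ₀, hlasso₀, hr₀, hc₀, t', hk, hv', fun ρ' _ hr' hc' => ?_⟩
    by_contra hlt
    exact ntr _ _ _ (hle₀ ρ hr hc) hlt (hwin' ρ' hr' hc')
  · rintro ⟨ρ, -, hr, hc, t, ⟨σ, m, ht⟩, hv, hbeat⟩
    obtain ⟨ρ₀, ⟨hr₀, hc₀⟩, hlasso₀, hle₀⟩ := hmin σ hl hne ht hv
    refine ⟨ρ, hr, hc, t, hv, fun ρ' hr' hc' => ?_⟩
    by_contra hlt
    exact ntr _ _ _ hlt (hle₀ ρ' hr' hc') (hbeat ρ₀ hlasso₀ hr₀ hc₀)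

theorem optimalAt_of_congr {l l' : List V} (hl : g.IsHist l) (hl' : g.IsHist l')
    (hnil : l.dropLast = [] ↔ l'.dropLast = []) (hv : g.lastV l = g.lastV l')
    (hm : memAfter σ₀ m₀ l.dropLast = memAfter σ₀ m₀ l'.dropLast)
    (hpref : ∀ ρ ρ', IsLasso K ρ → IsLasso K ρ' →
      ((g.future l).runPref a ρ ρ' ↔ (g.future l').runPref a ρ ρ'))
    (hopt : g.OptimalAt a s l) : g.OptimalAt a s l' := by
  by_cases hne : l.dropLast = []
  · rwa [hl'.eq_start_of_dropLast_eq_nil (hnil.1 hne), ← hl.eq_start_of_dropLast_eq_nil hne]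
  have hσ' : InducedBy σ₀ (memAfter σ₀ m₀ l.dropLast) (shiftStrat l' s) := by
    rw [hm]
    exact hσ₀.shiftStrat l'
  contrapose hopt
  rw [not_optimalAt_iff hswo hs hσ₀ H hmin₀ hmin hl' (hnil.not.1 hne)] at hopt
  rw [not_optimalAt_iff hswo hs hσ₀ H hmin₀ hmin hl hne]
  obtain ⟨ρ, hK, hr, hc, t, hk, hvt, hbeat⟩ := hopt
  refine ⟨ρ, hK, (g.isRun_future_congr hv).2 hr, ((hσ₀.shiftStrat l).compat_congr hσ' _).2 hc,
    t, hk, (g.validStrat_future_congr hv).2 hvt, fun ρ' hK' hr' hc' => ?_⟩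
  exact (hpref ρ ρ' hK hK').2 (hbeat ρ' hK' ((g.isRun_future_congr hv).1 hr') hc')

end Characterization

end Game

end GG

theorem stmt16_general
    {V C : Type} [Fintype V]
    (g : GG.Game V C Bool)
    (hswo : ∀ p, GG.SWO (g.pref p))
    -- (1) b wins her winnable future threshold games in every one-player game
    -- for b using uniformly finite memory
    (h1 : ∀ (V' : Type) [Fintype V'] (g' : GG.Game V' C Bool),
      (∀ v, g'.owner v = false) → (∀ p q, g'.pref false p q ↔ g.pref true q p) →
      ∃ m, ∀ (l : List V'), g'.IsHist l → ∀ ρ, (g'.future l).IsRun ρ →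
        (∃ s, (g'.future l).Wins1 false ρ s) →
        ∃ s, (g'.future l).Wins1 false ρ s ∧ GG.UsesMem m s)
    -- (2) a wins her winnable future threshold games in g using uniformly finite memory
    (h2 : ∃ m', ∀ (l : List V), g.IsHist l → ∀ ρ, (g.future l).IsRun ρ →
      (∃ s, (g.future l).Wins1 true ρ s) →
      ∃ s, (g.future l).Wins1 true ρ s ∧ GG.UsesMem m' s)
    -- (3) ≺_a has the weak OIR property
    (h3 : GG.WeakOIR (g.pref true)) :
    g.OIR true := by
  rintro s hs ⟨m₀, σ₀, M₀, hσ₀⟩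
  obtain ⟨k, H⟩ := h2
  have h1' (M : Type) [Fintype M] (σ : V × M → V × M) :
      ∃ k, (g.opponentGame true σ).WinsFutureThresholds false k :=
    h1 _ (g.opponentGame true σ) (fun _ => rfl) fun _ _ => Iff.rfl
  obtain ⟨K₀, hK₀⟩ := g.exists_hasLassoMinima (hswo true) (h1' (Fin m₀ → Bool))
  obtain ⟨K₁, hK₁⟩ := g.exists_hasLassoMinima (hswo true) (h1' (Fin k → Bool))
  let Lasso := {ρ : ℕ → V // IsLasso (max K₀ K₁) ρ}
  refine exists_dfa_of_factorsThroughDFA (f := fun l =>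
    (((l.dropLast = [], memAfter σ₀ M₀ l.dropLast), g.lastV l),
      fun ρρ' : Lasso × Lasso => (g.future l).runPref true ρρ'.1 ρρ'.2)) ?_ ?_
  · refine .prodMk (.prodMk (.prodMk FactorsThroughDFA.eq_nil.comp_dropLast
      (FactorsThroughDFA.of_foldl _ _).comp_dropLast) ?_) (.pi fun ρρ' =>
        ((h3.factorsThroughDFA (ρρ'.1.2.map g.color).ultPeriodic
          (ρρ'.2.2.map g.color).ultPeriodic).comp_map g.color).comp_dropLast)
    exact g.factorsThroughDFA_lastV
  · rintro l l' hl hl' heq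
    simp only [Prod.mk.injEq] at heq
    obtain ⟨⟨⟨hnil, hm⟩, hv⟩, hpref⟩ := heq
    exact g.optimalAt_of_congr (hswo true) hs hσ₀ H ((hK₀ σ₀).mono (le_max_left ..))
      (fun σ => (hK₁ σ).mono (le_max_right ..)) hl hl' (Iff.of_eq hnil) hv hm
      fun ρ ρ' hρ hρ' => Iff.of_eq (congrFun hpref (⟨ρ, hρ⟩, ⟨ρ', hρ'⟩))

/-- Proposition 5.4: weak OIR plus uniform finite-memory conditions imply the
optimality-is-regular property for player `a` (= `true`) in the antagonistic
game `g`; player `b` is `false`. -/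
theorem stmt16
    {V C : Type} [Fintype V]
    (g : GG.Game V C Bool)
    (hswo : ∀ p, GG.SWO (g.pref p))
    (hant : ∀ p q, g.pref false p q ↔ g.pref true q p)
    -- (1) b wins her winnable future threshold games in every one-player game
    -- for b using uniformly finite memory
    (h1 : ∀ (V' : Type) [Fintype V'] (g' : GG.Game V' C Bool),
      (∀ v, g'.owner v = false) → (∀ p q, g'.pref false p q ↔ g.pref true q p) →
      ∃ m, ∀ (l : List V'), g'.IsHist l → ∀ ρ, (g'.future l).IsRun ρ →
        (∃ s, (g'.future l).Wins1 false ρ s) →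
        ∃ s, (g'.future l).Wins1 false ρ s ∧ GG.UsesMem m s)
    -- (2) a wins her winnable future threshold games in g using uniformly finite memory
    (h2 : ∃ m', ∀ (l : List V), g.IsHist l → ∀ ρ, (g.future l).IsRun ρ →
      (∃ s, (g.future l).Wins1 true ρ s) →
      ∃ s, (g.future l).Wins1 true ρ s ∧ GG.UsesMem m' s)
    -- (3) ≺_a has the weak OIR property
    (h3 : GG.WeakOIR (g.pref true)) :
    g.OIR true :=
  stmt16_general g hswo h1 h2 h3
end

section
/- Let C be a finite alphabet and let ≺₁ and ≺₂ be strict weak orders on C^ω that both have the weak OIR property. Define their lexicographic product ≺ on C^ω by: p ≺ q iff p ≺₁ q, or (¬(p ≺₁ q) and ¬(q ≺₁ p) and p ≺₂ q). Then ≺ has the weak OIR property. -/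
open GG

private lemma foldl_prod3 {α Q1 Q2 Q3 : Type} (s1 : Q1 → α → Q1) (s2 : Q2 → α → Q2)
    (s3 : Q3 → α → Q3) (w : List α) (q : Q1 × Q2 × Q3) :
    w.foldl (fun q a => (s1 q.1 a, s2 q.2.1 a, s3 q.2.2 a)) q =
      (w.foldl s1 q.1, w.foldl s2 q.2.1, w.foldl s3 q.2.2) := by
  induction w generalizing q with
  | nil => rfl
  | cons a w ih => simp [List.foldl_cons, ih]

private lemma regLang_combine3 {α : Type} (L1 L2 L3 : Set (List α))
    (h1 : RegLang L1) (h2 : RegLang L2) (h3 : RegLang L3)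
    (P : Prop → Prop → Prop → Prop) :
    RegLang {w | P (w ∈ L1) (w ∈ L2) (w ∈ L3)} := by
  obtain ⟨Q1, f1, s1, i1, a1, hQ1⟩ := h1
  obtain ⟨Q2, f2, s2, i2, a2, hQ2⟩ := h2
  obtain ⟨Q3, f3, s3, i3, a3, hQ3⟩ := h3
  refine ⟨Q1 × Q2 × Q3, @instFintypeProd _ _ f1 (@instFintypeProd _ _ f2 f3),
    fun q a => (s1 q.1 a, s2 q.2.1 a, s3 q.2.2 a), (i1, i2, i3),
    {q | P (q.1 ∈ a1) (q.2.1 ∈ a2) (q.2.2 ∈ a3)}, ?_⟩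
  intro w
  rw [foldl_prod3]
  simp only [Set.mem_setOf_eq]
  rw [hQ1 w, hQ2 w, hQ3 w]

/-- Lemma 6.6: the weak OIR property is preserved by lexicographic products. -/
theorem stmt17
    {C : Type} [Fintype C]
    (p1 p2 : (ℕ → C) → (ℕ → C) → Prop)
    (h1s : GG.SWO p1) (h2s : GG.SWO p2)
    (h1 : GG.WeakOIR p1) (h2 : GG.WeakOIR p2) :
    GG.WeakOIR (fun p q => p1 p q ∨ (¬ p1 p q ∧ ¬ p1 q p ∧ p2 p q)) := by
  intro p q hp hq
  obtain ⟨M1, hM1r, hM1⟩ := h1 p q hp hq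
  obtain ⟨M1', hM1'r, hM1'⟩ := h1 q p hq hp
  obtain ⟨M2, hM2r, hM2⟩ := h2 p q hp hq
  refine ⟨{w | (w ∈ M1) ∨ (¬ (w ∈ M1) ∧ ¬ (w ∈ M1') ∧ (w ∈ M2))},
    regLang_combine3 M1 M1' M2 hM1r hM1'r hM2r
      (fun A B D => A ∨ (¬ A ∧ ¬ B ∧ D)), ?_⟩
  intro h
  simp only [Set.mem_setOf_eq, hM1 h, hM1' h, hM2 h]
end
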